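/- arXiv:1908.09429 — 2 statements merged into one kernel-verified Lean document; each statement's English description precedes it below -/
import Mathlib

section
/- Suppose v : ℝⁿ → ℝⁿ satisfies ‖Dv(x) − Dv(z)‖ ≤ H_v‖x − z‖ for all x, z, and fix block structure x = (x_1,…,x_m). Suppose additionally the block Dv_{j,i}(x) := ∇_{x_i} v_j(x) satisfies Dv_{j,i}(x) = Dv_{i,j}(x)^T (symmetry of the Hessian), v_j depends only on blocks in I_j, and v_i depends only on blocks in I_i. Then for all x, z: ‖∇_{x_i} v_j(x) − ∇_{z_i} v_j(z)‖ ≤ H_v · Σ_{l ∈ I_i ∩ I_j} ‖x_l − z_l‖. -/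
/-!
Since `v j` only sees the blocks in `I j`, the block `∂ᵢ v j` is unchanged when `x` is replaced
by the point `xj` that takes the blocks in `I j` from `x` and all others from `z`. By symmetry of
the Hessian `∂ᵢ v j = (∂ⱼ v i)ᵀ`, and `v i` only sees the blocks in `I i`, so `xj` may in turn be
replaced by the point `xij` that takes only the blocks in `I i ∩ I j` from `x`. Now `xij - z` is
supported on `I i ∩ I j`, so the global Lipschitz bound on `Dv` together with
`‖xij - z‖ ≤ ∑ l ∈ I i ∩ I j, ‖x l - z l‖` gives the claim.
-/

/-- The `(j, i)` block of the Jacobian of a vector field on a product of Euclidean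
spaces (the product equipped with the l2 norm). -/
noncomputable def blockDeriv {m : ℕ} {d : Fin m → ℕ}
    (v : PiLp 2 (fun j : Fin m => EuclideanSpace ℝ (Fin (d j))) →
         PiLp 2 (fun j : Fin m => EuclideanSpace ℝ (Fin (d j))))
    (j i : Fin m) (x : PiLp 2 (fun j : Fin m => EuclideanSpace ℝ (Fin (d j)))) :
    EuclideanSpace ℝ (Fin (d i)) →L[ℝ] EuclideanSpace ℝ (Fin (d j)) :=
  ((ContinuousLinearMap.proj (R := ℝ) (φ := fun k : Fin m => EuclideanSpace ℝ (Fin (d k))) j).comp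
      (PiLp.continuousLinearEquiv 2 ℝ
        (β := fun k : Fin m => EuclideanSpace ℝ (Fin (d k)))).toContinuousLinearMap).comp
    ((fderiv ℝ v x).comp
      (((PiLp.continuousLinearEquiv 2 ℝ
          (β := fun k : Fin m => EuclideanSpace ℝ (Fin (d k)))).symm.toContinuousLinearMap).comp
        (LinearMap.toContinuousLinearMap
          (LinearMap.single ℝ (fun k : Fin m => EuclideanSpace ℝ (Fin (d k))) i))))

namespace PiLp

variable {p : ENNReal} [Fact (1 ≤ p)] {ι : Type*} [Fintype ι] {β : ι → Type*}
  [∀ i, NormedAddCommGroup (β i)]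

theorem norm_le_sum_norm (x : PiLp p β) : ‖x‖ ≤ ∑ i, ‖x i‖ := by
  classical
  calc ‖x‖ = ‖∑ i, single p i (x i)‖ := by
        conv_lhs =>
          rw [← WithLp.toLp_ofLp (p := p) x, ← Finset.univ_sum_single x.ofLp, WithLp.toLp_sum]
        simp only [toLp_single]
    _ ≤ ∑ i, ‖single p i (x i)‖ := norm_sum_le _ _
    _ = ∑ i, ‖x i‖ := by simp only [norm_single]

theorem norm_toLp_piecewise_sub_le [DecidableEq ι] (s : Finset ι) (x z : PiLp p β) :
    ‖WithLp.toLp p (s.piecewise x.ofLp z.ofLp) - z‖ ≤ ∑ i ∈ s, ‖x i - z i‖ := by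
  refine (norm_le_sum_norm _).trans_eq ?_
  rw [← Finset.sum_subset (Finset.subset_univ s)]
  · refine Finset.sum_congr rfl fun i hi => ?_
    simp [hi]
  · intro i _ hi
    simp [hi]

variable {𝕜 : Type*} [NontriviallyNormedField 𝕜] [∀ i, NormedSpace 𝕜 (β i)]
  {G : Type*} [NormedAddCommGroup G] [NormedSpace 𝕜 G]

theorem fderiv_eq_of_forall_mem_eq {s : Finset ι} {g : PiLp p β → G}
    (hg : ∀ x y : PiLp p β, (∀ i ∈ s, x i = y i) → g x = g y) {a b : PiLp p β}
    (hab : ∀ i ∈ s, a i = b i) : fderiv 𝕜 g a = fderiv 𝕜 g b := by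
  have hshift : (fun y => g (y + (a - b))) = g :=
    funext fun y => hg _ _ fun i hi => by simp [hab i hi]
  calc fderiv 𝕜 g a = fderiv 𝕜 (fun y => g (y + (a - b))) b := by
        rw [fderiv_comp_add_right, add_sub_cancel]
    _ = fderiv 𝕜 g b := by rw [hshift]

end PiLp

section blockDeriv

variable {m : ℕ} {d : Fin m → ℕ}
  {v : PiLp 2 (fun j : Fin m => EuclideanSpace ℝ (Fin (d j))) →
    PiLp 2 (fun j : Fin m => EuclideanSpace ℝ (Fin (d j)))}

theorem blockDeriv_apply (j i : Fin m)
    (x : PiLp 2 (fun j : Fin m => EuclideanSpace ℝ (Fin (d j))))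
    (u : EuclideanSpace ℝ (Fin (d i))) :
    blockDeriv v j i x u = fderiv ℝ v x (PiLp.single 2 i u) j := rfl

theorem blockDeriv_eq_of_forall_mem_eq (hv : Differentiable ℝ v) {s : Finset (Fin m)}
    {j : Fin m} (hdep : ∀ x y, (∀ l ∈ s, x l = y l) → v x j = v y j) (i : Fin m)
    {a b : PiLp 2 (fun j : Fin m => EuclideanSpace ℝ (Fin (d j)))} (hab : ∀ l ∈ s, a l = b l) :
    blockDeriv v j i a = blockDeriv v j i b := by
  have hcomp : ∀ x, fderiv ℝ (fun y => v y j) x = PiLp.proj 2 _ j ∘L fderiv ℝ v x := fun x =>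
    ((PiLp.hasFDerivAt_apply (𝕜 := ℝ) 2 (v x) j).comp x (hv x).hasFDerivAt).fderiv
  have hj := PiLp.fderiv_eq_of_forall_mem_eq (𝕜 := ℝ) hdep hab
  refine ContinuousLinearMap.ext fun u => ?_
  simpa only [blockDeriv_apply, hcomp, ContinuousLinearMap.comp_apply, PiLp.proj_apply] using
    congrArg (fun L : _ →L[ℝ] _ => L (PiLp.single 2 i u)) hj

theorem norm_blockDeriv_sub_le (j i : Fin m)
    (a b : PiLp 2 (fun j : Fin m => EuclideanSpace ℝ (Fin (d j)))) :
    ‖blockDeriv v j i a - blockDeriv v j i b‖ ≤ ‖fderiv ℝ v a - fderiv ℝ v b‖ := by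
  refine ContinuousLinearMap.opNorm_le_bound _ (norm_nonneg _) fun u => ?_
  calc ‖(blockDeriv v j i a - blockDeriv v j i b) u‖
      = ‖(fderiv ℝ v a - fderiv ℝ v b) (PiLp.single 2 i u) j‖ := rfl
    _ ≤ ‖(fderiv ℝ v a - fderiv ℝ v b) (PiLp.single 2 i u)‖ := PiLp.norm_apply_le _ _
    _ ≤ ‖fderiv ℝ v a - fderiv ℝ v b‖ * ‖u‖ := by
        simpa only [PiLp.norm_single] using
          (fderiv ℝ v a - fderiv ℝ v b).le_opNorm (PiLp.single 2 i u)

end blockDeriv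

theorem stmt13_general {m : ℕ} (d : Fin m → ℕ)
    (v : PiLp 2 (fun j : Fin m => EuclideanSpace ℝ (Fin (d j))) →
         PiLp 2 (fun j : Fin m => EuclideanSpace ℝ (Fin (d j))))
    (hv : ContDiff ℝ 1 v) (Hv : ℝ) (hHv : 0 < Hv)
    (hLip : ∀ x z, ‖fderiv ℝ v x - fderiv ℝ v z‖ ≤ Hv * ‖x - z‖)
    (I : Fin m → Finset (Fin m))
    (hsymm : ∀ x i j, ContinuousLinearMap.adjoint (blockDeriv v i j x) = blockDeriv v j i x)
    (hdep : ∀ j, ∀ x y, (∀ l ∈ I j, x l = y l) → v x j = v y j) :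
    ∀ x z i j, ‖blockDeriv v j i x - blockDeriv v j i z‖
      ≤ Hv * ∑ l ∈ I i ∩ I j, ‖x l - z l‖ := by
  intro x z i j
  have hvd : Differentiable ℝ v := hv.differentiable one_ne_zero
  set xj := WithLp.toLp 2 ((I j).piecewise x.ofLp z.ofLp)
  set xij := WithLp.toLp 2 ((I i ∩ I j).piecewise x.ofLp z.ofLp)
  have hx_xj : blockDeriv v j i x = blockDeriv v j i xj :=
    blockDeriv_eq_of_forall_mem_eq hvd (hdep j) i fun l hl =>
      (Finset.piecewise_eq_of_mem _ _ _ hl).symm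
  have hxj_xij : blockDeriv v j i xj = blockDeriv v j i xij := by
    rw [← hsymm xj i j, ← hsymm xij i j,
      blockDeriv_eq_of_forall_mem_eq hvd (hdep i) j fun l hl => ?_]
    by_cases hlj : l ∈ I j <;> simp [xj, xij, hl, hlj]
  calc ‖blockDeriv v j i x - blockDeriv v j i z‖
      = ‖blockDeriv v j i xij - blockDeriv v j i z‖ := by rw [hx_xj, hxj_xij]
    _ ≤ ‖fderiv ℝ v xij - fderiv ℝ v z‖ := norm_blockDeriv_sub_le j i xij z
    _ ≤ Hv * ‖xij - z‖ := hLip xij z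
    _ ≤ Hv * ∑ l ∈ I i ∩ I j, ‖x l - z l‖ := by
        gcongr
        exact PiLp.norm_toLp_piecewise_sub_le _ x z

theorem stmt13 {m : ℕ} (d : Fin m → ℕ)
    (v : PiLp 2 (fun j : Fin m => EuclideanSpace ℝ (Fin (d j))) →
         PiLp 2 (fun j : Fin m => EuclideanSpace ℝ (Fin (d j))))
    (hv : ContDiff ℝ 1 v) (Hv : ℝ) (hHv : 0 < Hv)
    (hLip : ∀ x z, ‖fderiv ℝ v x - fderiv ℝ v z‖ ≤ Hv * ‖x - z‖)
    (I : Fin m → Finset (Fin m)) (hI : ∀ j, j ∈ I j)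
    (hsymm : ∀ x i j, ContinuousLinearMap.adjoint (blockDeriv v i j x) = blockDeriv v j i x)
    (hdep : ∀ j, ∀ x y, (∀ l ∈ I j, x l = y l) → v x j = v y j) :
    ∀ x z i j, ‖blockDeriv v j i x - blockDeriv v j i z‖
      ≤ Hv * ∑ l ∈ I i ∩ I j, ‖x l - z l‖ :=
  stmt13_general d v hv Hv hHv hLip I hsymm hdep
end

section
/- Let π be a smooth positive density on ℝⁿ with block partition x = (x_1,…,x_m). If there exists a symmetric matrix function H(x) ∈ ℝ^{m×m} with λ_max(H(x)) ≤ −λ_H < 0 such that ∇²_{x_j,x_j} log π(x) ⪯ H_{j,j}(x) I for each j and ‖∇²_{x_j,x_i} log π(x)‖ ≤ H_{j,i}(x) for i ≠ j, then for any x, z ∈ ℝⁿ, ⟨∇ log π(x) − ∇ log π(z), x − z⟩ ≤ −λ_H ‖x − z‖²; in particular log π is strongly concave with parameter λ_H. -/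
open Matrix in
lemma quad_form_le {m : ℕ} (H : Matrix (Fin m) (Fin m) ℝ) (hH : H.IsHermitian)
    (c : ℝ) (h : ∀ i, hH.eigenvalues i ≤ c) (w : Fin m → ℝ) :
    w ⬝ᵥ (H *ᵥ w) ≤ c * (w ⬝ᵥ w) := by
  classical
  set U : Matrix (Fin m) (Fin m) ℝ := (hH.eigenvectorUnitary : Matrix (Fin m) (Fin m) ℝ) with hU
  have hstar : star U = Uᵀ := U.conjTranspose_eq_transpose_of_trivial
  have hUU : U * star U = 1 := mem_unitaryGroup_iff.mp hH.eigenvectorUnitary.2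
  have hUUt : U * Uᵀ = 1 := by rw [← hstar]; exact hUU
  set y : Fin m → ℝ := Uᵀ *ᵥ w with hy
  have hyy : y ⬝ᵥ y = w ⬝ᵥ w := by
    rw [hy, dotProduct_mulVec, vecMul_transpose, mulVec_mulVec, hUUt, one_mulVec]
  have hquad : w ⬝ᵥ (H *ᵥ w) = ∑ i, hH.eigenvalues i * (y i)^2 := by
    conv_lhs => rw [hH.spectral_theorem, Unitary.conjStarAlgAut_apply, ← hU, ← mulVec_mulVec, ← mulVec_mulVec,
      dotProduct_mulVec, ← mulVec_transpose]
    rw [hstar, ← hy]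
    simp only [dotProduct, mulVec_diagonal, Function.comp_apply, RCLike.ofReal_real_eq_id, id_eq]
    exact Finset.sum_congr rfl fun i _ => by ring
  rw [hquad, ← hyy]
  have : c * (y ⬝ᵥ y) = ∑ i, c * (y i)^2 := by
    simp only [dotProduct, Finset.mul_sum, sq]
  rw [this]
  exact Finset.sum_le_sum fun i _ => mul_le_mul_of_nonneg_right (h i) (sq_nonneg _)

section StrongMono

variable {F : Type*} [NormedAddCommGroup F] [InnerProductSpace ℝ F] [CompleteSpace F]

lemma grad_contDiff (f : F → ℝ) (hf : ContDiff ℝ (⊤ : ℕ∞) f) :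
    ContDiff ℝ (⊤ : ℕ∞) (fun y => gradient f y) := by
  have h1 : ContDiff ℝ (⊤ : ℕ∞) (fderiv ℝ f) := hf.fderiv_right (by simp)
  exact ((InnerProductSpace.toDual ℝ F).symm.toContinuousLinearEquiv.toContinuousLinearMap).contDiff.comp h1

omit [CompleteSpace F] in
lemma strong_mono (g : F → F) (hg : Differentiable ℝ g) (lam : ℝ)
    (key : ∀ y (u : F), (inner ℝ (fderiv ℝ g y u) u : ℝ) ≤ lam * ‖u‖ ^ 2) :
    ∀ x z, (inner ℝ (g x - g z) (x - z) : ℝ) ≤ lam * ‖x - z‖ ^ 2 := by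
  intro x z
  set u : F := x - z with hu
  set φ : ℝ → ℝ := fun t => (inner ℝ (g (z + t • u)) u : ℝ) with hφ
  have hline : ∀ t : ℝ, HasDerivAt (fun t : ℝ => z + t • u) u t := fun t => by
    simpa using ((hasDerivAt_id t).smul_const u).const_add z
  have hd : ∀ t : ℝ, HasDerivAt φ (inner ℝ (fderiv ℝ g (z + t • u) u) u : ℝ) t := by
    intro t
    have h1 : HasDerivAt (fun t : ℝ => g (z + t • u)) (fderiv ℝ g (z + t • u) u) t :=
      (hg _).hasFDerivAt.comp_hasDerivAt t (hline t)
    have h2 := h1.inner ℝ (hasDerivAt_const t u)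
    simpa using h2
  obtain ⟨c, _, hc⟩ := exists_hasDerivAt_eq_slope φ
      (fun t => (inner ℝ (fderiv ℝ g (z + t • u) u) u : ℝ)) zero_lt_one
      (fun t _ => (hd t).continuousAt.continuousWithinAt)
      (fun t _ => hd t)
  have hx : z + u = x := by rw [hu]; abel
  have h10 : φ 1 - φ 0 = (inner ℝ (g x - g z) (x - z) : ℝ) := by
    simp only [hφ, one_smul, zero_smul, add_zero, hx, ← inner_sub_left, ← hu]
  calc (inner ℝ (g x - g z) (x - z) : ℝ) = φ 1 - φ 0 := h10.symm
    _ = (inner ℝ (fderiv ℝ g (z + c • u) u) u : ℝ) := by rw [hc]; ring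
    _ ≤ lam * ‖u‖ ^ 2 := key _ _

end StrongMono

lemma pointwise_bound {m : ℕ} {d : Fin m → ℕ}
    (g : PiLp 2 (fun j : Fin m => EuclideanSpace ℝ (Fin (d j))) →
         PiLp 2 (fun j : Fin m => EuclideanSpace ℝ (Fin (d j))))
    (x : PiLp 2 (fun j : Fin m => EuclideanSpace ℝ (Fin (d j))))
    (M : Matrix (Fin m) (Fin m) ℝ)
    (hdiag : ∀ j (u : EuclideanSpace ℝ (Fin (d j))),
      (inner ℝ u (blockDeriv g j j x u) : ℝ) ≤ M j j * ‖u‖ ^ 2)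
    (hoff : ∀ i j, i ≠ j → ‖blockDeriv g j i x‖ ≤ M j i)
    (u : PiLp 2 (fun j : Fin m => EuclideanSpace ℝ (Fin (d j)))) :
    (inner ℝ (fderiv ℝ g x u) u : ℝ) ≤ ∑ i, ∑ j, M j i * (‖u j‖ * ‖u i‖) := by
  classical
  set e := PiLp.continuousLinearEquiv 2 ℝ (β := fun k : Fin m => EuclideanSpace ℝ (Fin (d k)))
  set D := fderiv ℝ g x with hD
  have hu : u = ∑ i, e.symm (Pi.single i (u i)) := by
    have h1 : ∑ i, Pi.single i (e u i) = e u := Finset.univ_sum_single (e u)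
    calc u = e.symm (e u) := (e.symm_apply_apply u).symm
      _ = e.symm (∑ i, Pi.single i (e u i)) := by rw [h1]
      _ = ∑ i, e.symm (Pi.single i (u i)) := by rw [map_sum]; rfl
  have hsplit : (inner ℝ (D u) u : ℝ)
      = ∑ i, ∑ j, (inner ℝ (blockDeriv g j i x (u i)) (u j) : ℝ) := by
    have hDu : D u = ∑ i, D (e.symm (Pi.single i (u i))) := by rw [← map_sum, ← hu]
    rw [hDu, sum_inner]
    refine Finset.sum_congr rfl fun i _ => ?_
    rw [PiLp.inner_apply]
    rfl
  rw [hsplit]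
  refine Finset.sum_le_sum fun i _ => Finset.sum_le_sum fun j _ => ?_
  by_cases hij : i = j
  · subst hij
    calc (inner ℝ (blockDeriv g i i x (u i)) (u i) : ℝ)
        = (inner ℝ (u i) (blockDeriv g i i x (u i)) : ℝ) := real_inner_comm _ _
      _ ≤ M i i * ‖u i‖ ^ 2 := hdiag i (u i)
      _ = M i i * (‖u i‖ * ‖u i‖) := by ring
  · calc (inner ℝ (blockDeriv g j i x (u i)) (u j) : ℝ)
        ≤ ‖blockDeriv g j i x (u i)‖ * ‖u j‖ := real_inner_le_norm _ _
      _ ≤ (‖blockDeriv g j i x‖ * ‖u i‖) * ‖u j‖ :=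
          mul_le_mul_of_nonneg_right ((blockDeriv g j i x).le_opNorm _) (norm_nonneg _)
      _ ≤ (M j i * ‖u i‖) * ‖u j‖ :=
          mul_le_mul_of_nonneg_right
            (mul_le_mul_of_nonneg_right (hoff i j hij) (norm_nonneg _)) (norm_nonneg _)
      _ = M j i * (‖u j‖ * ‖u i‖) := by ring

theorem stmt17 {m : ℕ} (d : Fin m → ℕ)
    (π : PiLp 2 (fun j : Fin m => EuclideanSpace ℝ (Fin (d j))) → ℝ)
    (hπ : ContDiff ℝ (⊤ : ℕ∞) π) (hpos : ∀ x, 0 < π x)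
    (H : PiLp 2 (fun j : Fin m => EuclideanSpace ℝ (Fin (d j))) → Matrix (Fin m) (Fin m) ℝ)
    (hH : ∀ x, (H x).IsHermitian)
    (lamH : ℝ) (hlam : 0 < lamH)
    (heig : ∀ x i, (hH x).eigenvalues i ≤ -lamH)
    (hdiag : ∀ x j (u : EuclideanSpace ℝ (Fin (d j))),
      (inner ℝ u (blockDeriv (fun y => gradient (fun w => Real.log (π w)) y) j j x u) : ℝ)
        ≤ H x j j * ‖u‖ ^ 2)
    (hoff : ∀ x i j, i ≠ j →
      ‖blockDeriv (fun y => gradient (fun w => Real.log (π w)) y) j i x‖ ≤ H x j i) :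
    ∀ x z,
      (inner ℝ (gradient (fun w => Real.log (π w)) x - gradient (fun w => Real.log (π w)) z)
        (x - z) : ℝ) ≤ -lamH * ‖x - z‖ ^ 2 := by
  have hf : ContDiff ℝ (⊤ : ℕ∞) (fun w => Real.log (π w)) := hπ.log fun w => (hpos w).ne'
  have hg : ContDiff ℝ (⊤ : ℕ∞) (fun y => gradient (fun w => Real.log (π w)) y) :=
    grad_contDiff _ hf
  refine strong_mono _ (hg.differentiable (by simp)) (-lamH) ?_
  intro y u
  set w : Fin m → ℝ := fun j => ‖u j‖ with hw
  calc (inner ℝ (fderiv ℝ (fun y => gradient (fun w => Real.log (π w)) y) y u) u : ℝ)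
      ≤ ∑ i, ∑ j, H y j i * (‖u j‖ * ‖u i‖) :=
        pointwise_bound _ y (H y) (hdiag y) (fun i j h => hoff y i j h) u
    _ = dotProduct w (Matrix.mulVec (H y) w) := by
        rw [Finset.sum_comm]
        simp only [dotProduct, Matrix.mulVec, dotProduct, Finset.mul_sum]
        exact Finset.sum_congr rfl fun j _ => Finset.sum_congr rfl fun i _ => by rw [hw]; ring
    _ ≤ -lamH * dotProduct w w := quad_form_le (H y) (hH y) (-lamH) (heig y) w
    _ = -lamH * ‖u‖ ^ 2 := by
        rw [PiLp.norm_sq_eq_of_L2]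
        simp only [dotProduct, hw, ← sq]
end
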